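/- Define the value function V by V(T,x) = 1_{A(T)}(x) and V(t,x) = max_{u ∈ B(t,x)} E_μ[1_{A(t)}(x) · V(t+1, f(t,x,u,ω))], with B(t,x) nonempty and finite. Then V(t₀,x₀) = max over admissible feedbacks u (i.e., u(t,x) ∈ B(t,x) for all t,x) of P(x(t) ∈ A(t) for t = t₀,...,T), where x(·) is the closed-loop trajectory from x₀ under u and P is the product law of the i.i.d. noise. -/

import Mathlib

/-!
Backward induction. For a fixed feedback, resampling the noise at time `t` (which leaves the
product law unchanged) shows that the viability probability obeys the dynamic programming
equation with the maximum replaced by the value at `u t x`. By induction from `T` downwards it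
is therefore at most `V` for every admissible feedback, and equal to `V` for a feedback that
picks a maximiser at every `(t, x)`.
-/

open Finset Filter
open scoped Classical BigOperators

/-- State after evolving `k` steps from `x` at time `t` under feedback `u` and scenario `ω`. -/
def traj {X U W : Type*} (f : ℕ → X → U → W → X) (u : ℕ → X → U) (ω : ℕ → W) :
    ℕ → X → ℕ → X
  | _, x, 0 => x
  | t, x, k + 1 => traj f u ω (t + 1) (f t x (u t x) (ω t)) k

/-- Probability, under the product law of the i.i.d. noise with marginal `μ`, that the
closed-loop trajectory starting from `x0` at time `t0` under feedback `u` satisfies the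
state constraints `A s` for all `s = t0, …, T`. -/
noncomputable def viabProb {X U W : Type*} [Fintype W] [Inhabited W]
    (f : ℕ → X → U → W → X) (A : ℕ → Set X) (μ : W → ℝ) (T : ℕ)
    (u : ℕ → X → U) (t0 : ℕ) (x0 : X) : ℝ :=
  ∑ ω : Fin T → W, (∏ i, μ (ω i)) *
    (if ∀ s ∈ Finset.Icc t0 T,
        traj f u (fun n => if h : n < T then ω ⟨n, h⟩ else default) t0 x0 (s - t0) ∈ A s
      then (1 : ℝ) else 0)

section ProductLaw

variable {ι W R : Type*} [Fintype ι] [DecidableEq ι] [CommSemiring R]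

lemma mul_prod_apply_eq_mul_prod_update (μ : W → R) (ω : ι → W) (i : ι) (w : W) :
    μ w * ∏ j, μ (ω j) = μ (ω i) * ∏ j, μ (Function.update ω i w j) := by
  simp_rw [Function.apply_update (fun _ => μ), Finset.prod_update_of_mem (Finset.mem_univ i),
    Finset.sdiff_singleton_eq_erase, ← Finset.mul_prod_erase _ (fun j => μ (ω j)) (Finset.mem_univ i)]
  ring

lemma sum_prod_eq_one [Fintype W] (μ : W → R) (hμ : ∑ w, μ w = 1) :
    ∑ ω : ι → W, ∏ j, μ (ω j) = 1 := by
  rw [← Fintype.prod_sum, hμ, prod_const_one]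

/-- Resampling one coordinate independently does not change the product law. -/
lemma sum_prod_mul_eq_sum_mul_sum_prod_mul_update [Fintype W] (μ : W → R) (hμ : ∑ w, μ w = 1)
    (i : ι) (G : (ι → W) → R) :
    ∑ ω : ι → W, (∏ j, μ (ω j)) * G ω
      = ∑ w, μ w * ∑ ω : ι → W, (∏ j, μ (ω j)) * G (Function.update ω i w) := by
  let φ : (ι → W) × W → (ι → W) × W := fun p => (Function.update p.1 i p.2, p.1 i)
  have hφ : Function.Involutive φ := fun p => by simp [φ]
  calc ∑ ω : ι → W, (∏ j, μ (ω j)) * G ω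
      = ∑ p : (ι → W) × W, μ p.2 * ((∏ j, μ (p.1 j)) * G p.1) := by
        simp_rw [Fintype.sum_prod_type, ← Finset.sum_mul, hμ, one_mul]
    _ = ∑ p : (ι → W) × W,
          μ (p.1 i) * ((∏ j, μ (Function.update p.1 i p.2 j)) * G (Function.update p.1 i p.2)) :=
        (Fintype.sum_bijective φ hφ.bijective _ _ fun p => rfl).symm
    _ = ∑ w, μ w * ∑ ω : ι → W, (∏ j, μ (ω j)) * G (Function.update ω i w) := by
        simp_rw [← mul_assoc, ← mul_prod_apply_eq_mul_prod_update, Fintype.sum_prod_type_right,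
          mul_assoc, Finset.mul_sum]

end ProductLaw

section Trajectory

variable {X U W : Type*} (f : ℕ → X → U → W → X) (u : ℕ → X → U) (A : ℕ → Set X) (T : ℕ)

def StaysIn (ω : ℕ → W) (t : ℕ) (x : X) : Prop :=
  ∀ s ∈ Icc t T, traj f u ω t x (s - t) ∈ A s

variable {f u A T}

lemma traj_congr {ω ω' : ℕ → W} :
    ∀ {k t : ℕ} (x : X), (∀ n, t ≤ n → n < t + k → ω n = ω' n) →
      traj f u ω t x k = traj f u ω' t x k
  | 0, _, _, _ => rfl
  | k + 1, t, x, h => by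
    rw [traj, traj, h t le_rfl (by omega)]
    exact traj_congr _ fun n h₁ h₂ => h n (by omega) (by omega)

lemma staysIn_congr {ω ω' : ℕ → W} {t : ℕ} (x : X) (h : ∀ n, t ≤ n → n < T → ω n = ω' n) :
    StaysIn f u A T ω t x ↔ StaysIn f u A T ω' t x := by
  refine forall₂_congr fun s hs => ?_
  rw [traj_congr x fun n h₁ h₂ => h n h₁ (by rw [mem_Icc] at hs; omega)]

lemma staysIn_self_iff (ω : ℕ → W) (x : X) : StaysIn f u A T ω T x ↔ x ∈ A T := by
  simp [StaysIn, traj]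

lemma staysIn_iff_of_lt (ω : ℕ → W) {t : ℕ} (ht : t < T) (x : X) :
    StaysIn f u A T ω t x ↔
      x ∈ A t ∧ StaysIn f u A T ω (t + 1) (f t x (u t x) (ω t)) := by
  rw [StaysIn, ← Finset.insert_Icc_add_one_left_eq_Icc ht.le, forall_mem_insert, Nat.sub_self]
  refine and_congr Iff.rfl (forall₂_congr fun s hs => ?_)
  rw [show s - t = s - (t + 1) + 1 by rw [mem_Icc] at hs; omega, traj]

end Trajectory

def extendNoise {W : Type*} [Inhabited W] {T : ℕ} (ω : Fin T → W) : ℕ → W :=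
  fun n => if h : n < T then ω ⟨n, h⟩ else default

lemma extendNoise_update_self {W : Type*} [Inhabited W] {T t : ℕ} (ht : t < T)
    (ω : Fin T → W) (w : W) : extendNoise (Function.update ω ⟨t, ht⟩ w) t = w := by
  simp [extendNoise, ht]

lemma extendNoise_update_of_ne {W : Type*} [Inhabited W] {T t n : ℕ} (ht : t < T) (hn : n ≠ t)
    (ω : Fin T → W) (w : W) :
    extendNoise (Function.update ω ⟨t, ht⟩ w) n = extendNoise ω n := by
  unfold extendNoise
  split_ifs with h
  · exact Function.update_of_ne (fun he => hn (Fin.mk.inj_iff.mp he)) _ _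
  · rfl

section ViabilityProbability

variable {X U W : Type*} [Fintype W] [Inhabited W] {f : ℕ → X → U → W → X} {A : ℕ → Set X}
  {μ : W → ℝ} {T : ℕ} {u : ℕ → X → U} {V : ℕ → X → ℝ}

lemma viabProb_eq_sum_staysIn (t : ℕ) (x : X) :
    viabProb f A μ T u t x =
      ∑ ω : Fin T → W, (∏ i, μ (ω i)) *
        if StaysIn f u A T (extendNoise ω) t x then (1 : ℝ) else 0 := by
  unfold viabProb StaysIn extendNoise
  congr!

lemma viabProb_self (hμ : ∑ w, μ w = 1) (x : X) :
    viabProb f A μ T u T x = if x ∈ A T then (1 : ℝ) else 0 := by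
  simp_rw [viabProb_eq_sum_staysIn, staysIn_self_iff, ← Finset.sum_mul, sum_prod_eq_one μ hμ,
    one_mul]

lemma viabProb_of_lt (hμ : ∑ w, μ w = 1) {t : ℕ} (ht : t < T) (x : X) :
    viabProb f A μ T u t x =
      (if x ∈ A t then (1 : ℝ) else 0) *
        ∑ w, μ w * viabProb f A μ T u (t + 1) (f t x (u t x) w) := by
  have hstep : ∀ (ω : Fin T → W) (w : W),
      StaysIn f u A T (extendNoise (Function.update ω ⟨t, ht⟩ w)) t x ↔
        x ∈ A t ∧ StaysIn f u A T (extendNoise ω) (t + 1) (f t x (u t x) w) := by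
    intro ω w
    rw [staysIn_iff_of_lt _ ht, extendNoise_update_self,
      staysIn_congr _ fun n hn _ => extendNoise_update_of_ne ht (by omega) ω w]
  rw [viabProb_eq_sum_staysIn, sum_prod_mul_eq_sum_mul_sum_prod_mul_update μ hμ ⟨t, ht⟩,
    Finset.mul_sum]
  refine Finset.sum_congr rfl fun w _ => ?_
  by_cases hx : x ∈ A t <;> simp [hstep, hx, viabProb_eq_sum_staysIn]


lemma viabProb_le_of_supersolution (hμ0 : ∀ w, 0 ≤ μ w) (hμ : ∑ w, μ w = 1)
    (hVT : ∀ x, (if x ∈ A T then (1 : ℝ) else 0) ≤ V T x)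
    (hV : ∀ t < T, ∀ x,
      (if x ∈ A t then (1 : ℝ) else 0) * ∑ w, μ w * V (t + 1) (f t x (u t x) w) ≤ V t x)
    {t : ℕ} (ht : t ≤ T) (x : X) : viabProb f A μ T u t x ≤ V t x := by
  induction ht using Nat.decreasingInduction generalizing x with
  | self => exact (viabProb_self hμ x).trans_le (hVT x)
  | of_succ t ht ih =>
    rw [viabProb_of_lt hμ ht]
    refine le_trans ?_ (hV t ht x)
    gcongr with w
    · exact hμ0 w
    · exact ih _

lemma viabProb_eq_of_solution (hμ : ∑ w, μ w = 1)
    (hVT : ∀ x, V T x = if x ∈ A T then (1 : ℝ) else 0)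
    (hV : ∀ t < T, ∀ x,
      V t x = (if x ∈ A t then (1 : ℝ) else 0) * ∑ w, μ w * V (t + 1) (f t x (u t x) w))
    {t : ℕ} (ht : t ≤ T) (x : X) : viabProb f A μ T u t x = V t x := by
  induction ht using Nat.decreasingInduction generalizing x with
  | self => rw [viabProb_self hμ, hVT]
  | of_succ t ht ih => simp_rw [viabProb_of_lt hμ ht, ih, hV t ht x]

end ViabilityProbability

theorem value_function_eq_max_viability_probability
    {X U W : Type*} [Fintype W] [Inhabited W]
    (f : ℕ → X → U → W → X) (B : ℕ → X → Finset U) (A : ℕ → Set X)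
    (μ : W → ℝ) (hmu0 : ∀ w, 0 ≤ μ w) (hmu1 : ∑ w, μ w = 1) (T : ℕ)
    (hB : ∀ t x, (B t x).Nonempty)
    (V : ℕ → X → ℝ)
    (hVT : ∀ x, V T x = if x ∈ A T then (1 : ℝ) else 0)
    (hV : ∀ t, t < T → ∀ x,
      V t x = (B t x).sup' (hB t x)
        (fun u => (if x ∈ A t then (1 : ℝ) else 0) * ∑ w, μ w * V (t + 1) (f t x u w)))
    (t0 : ℕ) (ht0 : t0 ≤ T) (x0 : X) :
    IsGreatest
      {r : ℝ | ∃ u : ℕ → X → U, (∀ t x, u t x ∈ B t x) ∧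
        r = viabProb f A μ T u t0 x0}
      (V t0 x0) := by
  have hgreedy : ∀ t x, ∃ b ∈ B t x, t < T →
      V t x = (if x ∈ A t then (1 : ℝ) else 0) * ∑ w, μ w * V (t + 1) (f t x b w) := by
    intro t x
    obtain ⟨b, hb, hmax⟩ := Finset.exists_mem_eq_sup' (hB t x)
      fun b => (if x ∈ A t then (1 : ℝ) else 0) * ∑ w, μ w * V (t + 1) (f t x b w)
    exact ⟨b, hb, fun ht => (hV t ht x).trans hmax⟩
  choose uopt huopt hopt using hgreedy
  have hoptimal := viabProb_eq_of_solution hmu1 hVT (fun t ht x => hopt t x ht) ht0 x0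
  refine ⟨⟨uopt, huopt, hoptimal.symm⟩, ?_⟩
  rintro r ⟨u, hu, rfl⟩
  refine viabProb_le_of_supersolution hmu0 hmu1 (fun x => (hVT x).ge) (fun t ht x => ?_) ht0 x0
  exact (Finset.le_sup' _ (hu t x)).trans_eq (hV t ht x).symm
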